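/- arXiv:2105.08378 — 4 statements merged into one kernel-verified Lean document; each statement's English description precedes it below -/
import Mathlib

section
/- Let g : [0,1]^n → ℝ be a bounded function and let U ⊆ ℝ^n be any set with [−1,1]^n ⊆ U. Then inf_{c ∈ U} sup_{y ∈ Argmax(c)} g(y) = inf_{c ∈ [−1,1]^n} sup_{y ∈ Argmax(c)} g(y). -/
/-! Maximizers of a linear objective do not change under positive rescaling, and every
objective has a positive multiple in `[-1,1]^n`; so enlarging `[-1,1]^n` adds no new value
`sup_{y ∈ Argmax c} g(y)` to the set whose infimum is taken. -/

/-- The set of maximizers of `y ↦ cᵀy` over the unit box `[0,1]^n`. -/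
def argmaxBox (n : ℕ) (c : Fin n → ℝ) : Set (Fin n → ℝ) :=
  {y | (∀ i, y i ∈ Set.Icc (0 : ℝ) 1) ∧
    ∀ z : Fin n → ℝ, (∀ i, z i ∈ Set.Icc (0 : ℝ) 1) → ∑ i, c i * z i ≤ ∑ i, c i * y i}

lemma argmaxBox_smul {n : ℕ} (c : Fin n → ℝ) {t : ℝ} (ht : 0 < t) :
    argmaxBox n (t • c) = argmaxBox n c := by
  have hscale : ∀ w : Fin n → ℝ, ∑ i, (t • c) i * w i = t * ∑ i, c i * w i := fun w => by
    simp only [Pi.smul_apply, smul_eq_mul, Finset.mul_sum, mul_assoc]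
  ext y
  simp only [argmaxBox, Set.mem_ofPred_eq, hscale, mul_le_mul_iff_right₀ ht]

lemma exists_pos_smul_mem_Icc_neg_one_one {n : ℕ} (c : Fin n → ℝ) :
    ∃ t : ℝ, 0 < t ∧ ∀ i, (t • c) i ∈ Set.Icc (-1 : ℝ) 1 := by
  have hpos : 0 < ‖c‖ + 1 := by positivity
  refine ⟨(‖c‖ + 1)⁻¹, inv_pos.mpr hpos, fun i => abs_le.mp ?_⟩
  calc |((‖c‖ + 1)⁻¹ • c) i| = (‖c‖ + 1)⁻¹ * |c i| := by
        rw [Pi.smul_apply, smul_eq_mul, abs_mul, abs_of_pos (inv_pos.mpr hpos)]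
    _ ≤ (‖c‖ + 1)⁻¹ * (‖c‖ + 1) := by
        gcongr
        linarith [norm_le_pi_norm c i, Real.norm_eq_abs (c i)]
    _ = 1 := inv_mul_cancel₀ hpos.ne'

theorem stmt_4_general (n : ℕ) (g : (Fin n → ℝ) → ℝ)
    (U : Set (Fin n → ℝ))
    (hU : {c : Fin n → ℝ | ∀ i, c i ∈ Set.Icc (-1 : ℝ) 1} ⊆ U) :
    sInf ((fun c => sSup (g '' argmaxBox n c)) '' U) =
      sInf ((fun c => sSup (g '' argmaxBox n c)) ''
        {c : Fin n → ℝ | ∀ i, c i ∈ Set.Icc (-1 : ℝ) 1}) := by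
  refine congrArg sInf (Set.Subset.antisymm ?_ (Set.image_mono hU))
  rintro _ ⟨c, -, rfl⟩
  obtain ⟨t, ht, hbox⟩ := exists_pos_smul_mem_Icc_neg_one_one c
  exact ⟨t • c, hbox, by simp only [argmaxBox_smul c ht]⟩

/-- For a bounded function `g` on the unit box and any uncertainty set `U ⊇ [-1,1]^n`,
the value `inf_{c ∈ U} sup_{y ∈ Argmax c} g(y)` equals the corresponding value for
`U = [-1,1]^n`. -/
theorem stmt_4 (n : ℕ) (g : (Fin n → ℝ) → ℝ) (M : ℝ)
    (hg : ∀ y : Fin n → ℝ, (∀ i, y i ∈ Set.Icc (0 : ℝ) 1) → |g y| ≤ M)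
    (U : Set (Fin n → ℝ))
    (hU : {c : Fin n → ℝ | ∀ i, c i ∈ Set.Icc (-1 : ℝ) 1} ⊆ U) :
    sInf ((fun c => sSup (g '' argmaxBox n c)) '' U) =
      sInf ((fun c => sSup (g '' argmaxBox n c)) ''
        {c : Fin n → ℝ | ∀ i, c i ∈ Set.Icc (-1 : ℝ) 1}) :=
  stmt_4_general n g U hU
end

section
/- Let f : {0,1}^p × {0,1}^n → {0,1} be any function. Then the following are equivalent: (i) there exists x ∈ {0,1}^p such that f(x,y) = 1 for all y ∈ {0,1}^n; (ii) there exists x ∈ {0,1}^p such that for every c ∈ [−1,1]^n there exists a binary point y ∈ {0,1}^n that maximizes c^T y over [0,1]^n and satisfies f(x,y) = 1. -/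
/-- The real point in `{0,1}^n` corresponding to a Boolean vector. -/
def boolToReal {n : ℕ} (y : Fin n → Bool) : Fin n → ℝ := fun i => if y i then 1 else 0

theorem mem_argmaxBox_iff {n : ℕ} {c y : Fin n → ℝ} :
    y ∈ argmaxBox n c ↔
      (∀ i, y i ∈ Set.Icc (0 : ℝ) 1) ∧ ∀ i, ∀ t ∈ Set.Icc (0 : ℝ) 1, c i * t ≤ c i * y i := by
  refine and_congr_right fun hy => ⟨fun hmax i t ht => ?_, fun hcoord z hz => ?_⟩
  · have hz : ∀ j, Function.update y i t j ∈ Set.Icc (0 : ℝ) 1 := by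
      intro j
      rcases eq_or_ne j i with rfl | hj
      · simpa using ht
      · simpa [hj] using hy j
    have hdiff : ∑ j, c j * Function.update y i t j - ∑ j, c j * y j = c i * t - c i * y i := by
      rw [← Finset.sum_sub_distrib, Finset.sum_eq_single i (fun j _ hj => by simp [hj])
        (by simp)]
      simp
    linarith [hmax _ hz]
  · exact Finset.sum_le_sum fun i _ => hcoord i (z i) (hz i)

theorem boolToReal_mem_Icc {n : ℕ} (y : Fin n → Bool) (i : Fin n) :
    boolToReal y i ∈ Set.Icc (0 : ℝ) 1 := by
  unfold boolToReal
  split_ifs <;> simp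

theorem boolToReal_mem_argmaxBox {n : ℕ} (c : Fin n → ℝ) :
    boolToReal (fun i => decide (0 ≤ c i)) ∈ argmaxBox n c := by
  refine mem_argmaxBox_iff.2 ⟨boolToReal_mem_Icc _, fun i t ht => ?_⟩
  by_cases hc : 0 ≤ c i
  · simpa [boolToReal, hc] using mul_le_mul_of_nonneg_left ht.2 hc
  · simpa [boolToReal, hc] using mul_nonpos_of_nonpos_of_nonneg (le_of_not_ge hc) ht.1

/-- `boolToReal y₀` is the unique maximizer of this objective over the box. -/
def signObjective {n : ℕ} (y₀ : Fin n → Bool) : Fin n → ℝ := fun i => if y₀ i then 1 else -1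

theorem signObjective_mem_Icc {n : ℕ} (y₀ : Fin n → Bool) (i : Fin n) :
    signObjective y₀ i ∈ Set.Icc (-1 : ℝ) 1 := by
  unfold signObjective
  split_ifs <;> norm_num

theorem eq_of_boolToReal_mem_argmaxBox_signObjective {n : ℕ} {y₀ y : Fin n → Bool}
    (hy : boolToReal y ∈ argmaxBox n (signObjective y₀)) : y = y₀ := by
  funext i
  have hopt := (mem_argmaxBox_iff.1 hy).2 i _ (boolToReal_mem_Icc y₀ i)
  cases h₀ : y₀ i <;> cases h : y i <;> simp [boolToReal, signObjective, h₀, h] at hopt ⊢ <;>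
    norm_num at hopt

/-- `f` is a QSAT yes-instance iff the optimistic robust bilevel problem has value 1:
some `x` is such that for every `c ∈ [-1,1]^n` the follower has a binary optimal
response `y` with `f x y = 1`. -/
theorem stmt_6 (p n : ℕ) (f : (Fin p → Bool) → (Fin n → Bool) → Bool) :
    (∃ x : Fin p → Bool, ∀ y : Fin n → Bool, f x y = true) ↔
    (∃ x : Fin p → Bool, ∀ c : Fin n → ℝ, (∀ i, c i ∈ Set.Icc (-1 : ℝ) 1) →
      ∃ y : Fin n → Bool, boolToReal y ∈ argmaxBox n c ∧ f x y = true) := by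
  constructor
  · rintro ⟨x, hx⟩
    exact ⟨x, fun c _ => ⟨_, boolToReal_mem_argmaxBox c, hx _⟩⟩
  · rintro ⟨x, hx⟩
    refine ⟨x, fun y₀ => ?_⟩
    obtain ⟨y, hy, hfy⟩ := hx (signObjective y₀) (signObjective_mem_Icc y₀)
    rwa [← eq_of_boolToReal_mem_argmaxBox_signObjective hy]
end

section
/- Let f : {0,1}^p × {0,1}^n → {0,1} be any function, regard its values as real numbers, and define V = max_{x ∈ {0,1}^p} min_{c ∈ [−1,1]^n} max{ f(x,y) : y ∈ {0,1}^n is a maximizer of c^T y over [0,1]^n }. Then V = 1 if there exists x ∈ {0,1}^p with f(x,y) = 1 for all y ∈ {0,1}^n, and V = 0 otherwise. -/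
/-!
For a fixed leader decision `x`, the adversary choosing `c ∈ [-1,1]^n` can force any single
binary point `y₀` to be the follower's only binary optimum, by taking `c = ±1` according to the
bits of `y₀`; and it can never do better, since some binary point is always optimal. Hence the
inner `min_c max_y` equals `min_y f(x,y)`, and `V = max_x min_y f(x,y)`, which is the truth value
of `∃ x ∀ y, f(x,y)`.
-/

open Finset

namespace RobustBilevel

variable {n : ℕ}

abbrev binaryArgmax (n : ℕ) (c : Fin n → ℝ) : Set (Fin n → Bool) :=
  {y | boolToReal y ∈ argmaxBox n c}

def signVector (y : Fin n → Bool) : Fin n → ℝ := fun i => if y i then 1 else -1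

lemma boolToReal_mem_Icc (y : Fin n → Bool) (i : Fin n) : boolToReal y i ∈ Set.Icc (0 : ℝ) 1 := by
  unfold boolToReal; split_ifs <;> norm_num

lemma signVector_mem_Icc (y : Fin n → Bool) (i : Fin n) : signVector y i ∈ Set.Icc (-1 : ℝ) 1 := by
  unfold signVector; split_ifs <;> norm_num

lemma decide_nonneg_mem_binaryArgmax (c : Fin n → ℝ) :
    (fun i => decide (0 ≤ c i)) ∈ binaryArgmax n c := by
  refine ⟨boolToReal_mem_Icc _, fun z hz => sum_le_sum fun i _ => ?_⟩
  rcases le_or_gt 0 (c i) with h | h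
  · simpa [boolToReal, h] using mul_le_mul_of_nonneg_left (hz i).2 h
  · simpa [boolToReal, h.not_ge] using mul_nonpos_of_nonpos_of_nonneg h.le (hz i).1

lemma binaryArgmax_nonempty (c : Fin n → ℝ) : (binaryArgmax n c).Nonempty :=
  ⟨_, decide_nonneg_mem_binaryArgmax c⟩

lemma binaryArgmax_signVector (y₀ : Fin n → Bool) : binaryArgmax n (signVector y₀) = {y₀} := by
  have hround : (fun i => decide (0 ≤ signVector y₀ i)) = y₀ := by
    funext i; by_cases h : y₀ i <;> simp [signVector, h]
  have hself : y₀ ∈ binaryArgmax n (signVector y₀) := by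
    simpa only [hround] using decide_nonneg_mem_binaryArgmax (signVector y₀)
  refine Set.eq_singleton_iff_unique_mem.2 ⟨hself, fun y hy => ?_⟩
  have hterm : ∀ i ∈ univ,
      signVector y₀ i * boolToReal y i ≤ signVector y₀ i * boolToReal y₀ i := by
    intro i _
    by_cases h : y₀ i <;> by_cases h' : y i <;> simp [signVector, boolToReal, h, h']
  have hsum := le_antisymm (sum_le_sum hterm) (hy.2 _ (boolToReal_mem_Icc y₀))
  funext i
  have hi := (sum_eq_sum_iff_of_le hterm).1 hsum i (mem_univ i)
  by_cases h : y₀ i <;> by_cases h' : y i <;> simp [signVector, boolToReal, h, h'] at hi ⊢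

theorem sInf_sSup_image_binaryArgmax (g : (Fin n → Bool) → ℝ) :
    sInf ((fun c => sSup (g '' binaryArgmax n c)) '' {c | ∀ i, c i ∈ Set.Icc (-1 : ℝ) 1}) =
      ⨅ y, g y := by
  have hg : BddBelow (Set.range g) := (Set.finite_range g).bddBelow
  have hle : ∀ c, ⨅ y, g y ≤ sSup (g '' binaryArgmax n c) := fun c => by
    obtain ⟨y, hy⟩ := binaryArgmax_nonempty c
    exact (ciInf_le hg y).trans (le_csSup (Set.toFinite _).bddAbove (Set.mem_image_of_mem g hy))
  have hsign : ∀ y, sSup (g '' binaryArgmax n (signVector y)) = g y := fun y => by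
    rw [binaryArgmax_signVector, Set.image_singleton, csSup_singleton]
  have hbdd : BddBelow ((fun c => sSup (g '' binaryArgmax n c)) ''
      {c | ∀ i, c i ∈ Set.Icc (-1 : ℝ) 1}) :=
    ⟨⨅ y, g y, Set.forall_mem_image.2 fun c _ => hle c⟩
  refine le_antisymm (le_ciInf fun y => ?_) (le_csInf ⟨_, 0, fun i => by simp, rfl⟩ ?_)
  · exact hsign y ▸ csInf_le hbdd ⟨signVector y, signVector_mem_Icc y, rfl⟩
  · exact Set.forall_mem_image.2 fun c _ => hle c

end RobustBilevel

lemma Real.iInf_ite_one_zero {ι : Type*} [Nonempty ι] (P : ι → Prop) [DecidablePred P]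
    [Decidable (∀ i, P i)] :
    ⨅ i, (if P i then (1 : ℝ) else 0) = if ∀ i, P i then 1 else 0 := by
  by_cases h : ∀ i, P i
  · simp [h]
  · obtain ⟨i₀, hi₀⟩ := not_forall.1 h
    have hbdd : BddBelow (Set.range fun i => if P i then (1 : ℝ) else 0) :=
      ⟨0, Set.forall_mem_range.2 fun i => by split_ifs <;> norm_num⟩
    rw [if_neg h]
    refine le_antisymm ?_ (le_ciInf fun i => by split_ifs <;> norm_num)
    simpa [hi₀] using ciInf_le hbdd i₀

lemma Real.iSup_ite_one_zero {ι : Type*} (P : ι → Prop) [DecidablePred P]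
    [Decidable (∃ i, P i)] :
    ⨆ i, (if P i then (1 : ℝ) else 0) = if ∃ i, P i then 1 else 0 := by
  by_cases h : ∃ i, P i
  · obtain ⟨i₀, hi₀⟩ := h
    have : Nonempty ι := ⟨i₀⟩
    have hbdd : BddAbove (Set.range fun i => if P i then (1 : ℝ) else 0) :=
      ⟨1, Set.forall_mem_range.2 fun i => by split_ifs <;> norm_num⟩
    rw [if_pos ⟨i₀, hi₀⟩]
    refine le_antisymm (ciSup_le fun i => by split_ifs <;> norm_num) ?_
    simpa [hi₀] using le_ciSup hbdd i₀
  · simp [not_exists.1 h]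

open RobustBilevel in
/-- The value `V = max_x min_{c ∈ [-1,1]^n} max {f(x,y) : y binary maximizer of cᵀy}` of the
optimistic robust bilevel problem is `1` if `f` is a QSAT yes-instance and `0` otherwise. -/
theorem stmt_7 (p n : ℕ) (f : (Fin p → Bool) → (Fin n → Bool) → Bool) :
    ((∃ x : Fin p → Bool, ∀ y : Fin n → Bool, f x y = true) →
      (⨆ x : Fin p → Bool,
        sInf ((fun c : Fin n → ℝ =>
            sSup ((fun y : Fin n → Bool => if f x y then (1 : ℝ) else 0) ''
              {y : Fin n → Bool | boolToReal y ∈ argmaxBox n c})) ''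
          {c : Fin n → ℝ | ∀ i, c i ∈ Set.Icc (-1 : ℝ) 1})) = 1) ∧
    (¬ (∃ x : Fin p → Bool, ∀ y : Fin n → Bool, f x y = true) →
      (⨆ x : Fin p → Bool,
        sInf ((fun c : Fin n → ℝ =>
            sSup ((fun y : Fin n → Bool => if f x y then (1 : ℝ) else 0) ''
              {y : Fin n → Bool | boolToReal y ∈ argmaxBox n c})) ''
          {c : Fin n → ℝ | ∀ i, c i ∈ Set.Icc (-1 : ℝ) 1})) = 0) := by
  classical
  simp only [sInf_sSup_image_binaryArgmax, Real.iInf_ite_one_zero, Real.iSup_ite_one_zero]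
  constructor <;> intro h <;> simp [h]
end

section
/- Let c_1, …, c_m ∈ ℝ^p, x ∈ ℝ^p, and for z ∈ ℝ^m define φ_x(z) = Σ_{j=1}^m (c_j^T x) z_j. Consider the feasible set F(x) = { (y, z) ∈ ℝ × Δ_m : y = φ_x(z) }, where Δ_m is the standard simplex. Then for every j ∈ {1, …, m}, the unique maximizer of (y, z) ↦ e_j^T z over F(x) is (c_j^T x, e_j). Consequently, for every set X ⊆ {0,1}^p, sup_{x ∈ X} min_{j ∈ {1,…,m}} ( y-component of the unique maximizer of e_j^T z over F(x) ) = sup_{x ∈ X} min_{j ∈ {1,…,m}} c_j^T x. -/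
/-!
A point of the simplex has all coordinates at most `1`, with `z j = 1` only at the vertex `e_j`.
Since `(c_jᵀ x, e_j)` is feasible, maximizing `z j` over `F(x)` forces `z = e_j`, and then the
constraint gives `y = c_jᵀ x`; so the two robust values agree pointwise in `x`.
-/

/-- The standard simplex `Δ_m = {z ∈ ℝ^m : z ≥ 0, ∑ z i = 1}`. -/
def stdSimplex' (m : ℕ) : Set (Fin m → ℝ) :=
  {z | (∀ i, 0 ≤ z i) ∧ ∑ i, z i = 1}

/-- The follower's feasible set `F(x) = {(y,z) ∈ ℝ × Δ_m : y = ∑ j (c_jᵀ x) z_j}`. -/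
def feas (p m : ℕ) (c : Fin m → Fin p → ℝ) (x : Fin p → ℝ) : Set (ℝ × (Fin m → ℝ)) :=
  {q | q.2 ∈ stdSimplex' m ∧ q.1 = ∑ j, (∑ i, c j i * x i) * q.2 j}

/-- The set of maximizers of `(y,z) ↦ z j` over `F(x)`. -/
def maxSet (p m : ℕ) (c : Fin m → Fin p → ℝ) (x : Fin p → ℝ) (j : Fin m) :
    Set (ℝ × (Fin m → ℝ)) :=
  {q ∈ feas p m c x | ∀ r ∈ feas p m c x, r.2 j ≤ q.2 j}

theorem eq_single_of_mem_stdSimplex {𝕜 ι : Type*} [Semiring 𝕜] [PartialOrder 𝕜]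
    [IsOrderedCancelAddMonoid 𝕜] [Fintype ι] [DecidableEq ι] {f : ι → 𝕜}
    (hf : f ∈ stdSimplex 𝕜 ι) {i : ι} (hi : f i = 1) : f = Pi.single i 1 := by
  have hrest : ∑ k ∈ Finset.univ.erase i, f k = 0 := by
    have := Finset.add_sum_erase Finset.univ f (Finset.mem_univ i)
    rwa [hf.2, hi, add_eq_left] at this
  funext k
  rcases eq_or_ne k i with rfl | hk
  · simpa using hi
  · rw [Pi.single_eq_of_ne hk]
    exact (Finset.sum_eq_zero_iff_of_nonneg fun k _ => hf.1 k).1 hrest k (by simp [hk])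

section

variable {p m : ℕ} (c : Fin m → Fin p → ℝ) (x : Fin p → ℝ) (j : Fin m)

theorem single_mem_feas : (∑ i, c j i * x i, Pi.single j 1) ∈ feas p m c x :=
  ⟨single_mem_stdSimplex ℝ j, by simp [Pi.single_apply]⟩

theorem maxSet_eq_singleton : maxSet p m c x j = {(∑ i, c j i * x i, Pi.single j 1)} := by
  ext q
  constructor
  · rintro ⟨hq, hmax⟩
    have hqj : q.2 j = 1 := le_antisymm (mem_Icc_of_mem_stdSimplex hq.1 j).2
      (by simpa using hmax _ (single_mem_feas c x j))
    have hz := eq_single_of_mem_stdSimplex hq.1 hqj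
    refine Prod.ext ?_ hz
    rw [hq.2, hz]
    simp [Pi.single_apply]
  · rintro rfl
    exact ⟨single_mem_feas c x j, fun r hr => by
      simpa using (mem_Icc_of_mem_stdSimplex hr.1 j).2⟩

end

theorem stmt_13_general (p m : ℕ) (c : Fin m → Fin p → ℝ) :
    (∀ x : Fin p → ℝ, ∀ j : Fin m,
      maxSet p m c x j = {(∑ i, c j i * x i, fun i => if i = j then (1 : ℝ) else 0)}) ∧
    (∀ X : Set (Fin p → ℝ), (∀ x ∈ X, ∀ i, x i = 0 ∨ x i = 1) →
      ∀ sel : (Fin p → ℝ) → Fin m → ℝ × (Fin m → ℝ),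
        (∀ x ∈ X, ∀ j : Fin m, sel x j ∈ maxSet p m c x j) →
        sSup ((fun x => ⨅ j : Fin m, (sel x j).1) '' X)
          = sSup ((fun x => ⨅ j : Fin m, ∑ i, c j i * x i) '' X)) := by
  have hmax : ∀ x j, maxSet p m c x j =
      {(∑ i, c j i * x i, fun i => if i = j then (1 : ℝ) else 0)} := fun x j => by
    rw [maxSet_eq_singleton]
    simp only [← Pi.single_apply]
  refine ⟨hmax, fun X _ sel hsel => congrArg sSup (Set.image_congr fun x hx => ?_)⟩
  refine iInf_congr fun j => ?_
  have hsel_eq := hsel x hx j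
  rw [maxSet_eq_singleton, Set.mem_singleton_iff] at hsel_eq
  rw [hsel_eq]

/-- For every `x` and `j`, the unique maximizer of `(y,z) ↦ e_jᵀ z` over `F(x)` is
`(c_jᵀ x, e_j)`; consequently, for every `X ⊆ {0,1}^p`, the robust bilevel value
`sup_{x ∈ X} min_j (y`-component of the unique maximizer`)` equals
`sup_{x ∈ X} min_j c_jᵀ x`. -/
theorem stmt_13 (p m : ℕ) (hm : 1 ≤ m) (c : Fin m → Fin p → ℝ) :
    (∀ x : Fin p → ℝ, ∀ j : Fin m,
      maxSet p m c x j = {(∑ i, c j i * x i, fun i => if i = j then (1 : ℝ) else 0)}) ∧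
    (∀ X : Set (Fin p → ℝ), (∀ x ∈ X, ∀ i, x i = 0 ∨ x i = 1) →
      ∀ sel : (Fin p → ℝ) → Fin m → ℝ × (Fin m → ℝ),
        (∀ x ∈ X, ∀ j : Fin m, sel x j ∈ maxSet p m c x j) →
        sSup ((fun x => ⨅ j : Fin m, (sel x j).1) '' X)
          = sSup ((fun x => ⨅ j : Fin m, ∑ i, c j i * x i) '' X)) :=
  stmt_13_general p m c
end
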